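/- arXiv:2302.12755 — 2 statements merged into one kernel-verified Lean document; each statement's English description precedes it below -/
import Mathlib

section
/- For every ε ∈ [0, 1) there exists a function φ ∈ BMO_ε([0,1]) with ⟨φ⟩_{[0,1]} = 0 such that ⟨exp|φ|⟩_{[0,1]} = e^ε if 0 ≤ ε ≤ 1/2, and ⟨exp|φ|⟩_{[0,1]} = e^{1−ε}/(2 − 2ε) if 1/2 ≤ ε < 1; i.e., the sharp symmetric integral John–Nirenberg inequality is attained. -/
open MeasureTheory Real

/-- The average of `φ` over the interval `[a, b]`. -/
noncomputable def intervalAvg (a b : ℝ) (φ : ℝ → ℝ) : ℝ :=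
  (b - a)⁻¹ * ∫ t in a..b, φ t

/-- `φ` belongs to the `ε`-ball of `BMO([a,b])` (with the `L²`-based seminorm):
`φ` is in `L²([a,b])` and the mean square oscillation over every subinterval is at most `ε²`. -/
def MemBMO (ε a b : ℝ) (φ : ℝ → ℝ) : Prop :=
  MeasureTheory.IntegrableOn φ (Set.Icc a b) ∧
  MeasureTheory.IntegrableOn (fun t => (φ t) ^ 2) (Set.Icc a b) ∧
  ∀ c d : ℝ, a ≤ c → c < d → d ≤ b →
    intervalAvg c d (fun t => (φ t - intervalAvg c d φ) ^ 2) ≤ ε ^ 2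

/-- The Bellman function `𝔹_ε(x₁, x₂)` for the symmetric integral John–Nirenberg inequality. -/
noncomputable def bellman (ε x₁ x₂ : ℝ) : ℝ :=
  sSup { y : ℝ | ∃ φ : ℝ → ℝ, MemBMO ε 0 1 φ ∧
    intervalAvg 0 1 φ = x₁ ∧ intervalAvg 0 1 (fun t => (φ t) ^ 2) = x₂ ∧
    y = intervalAvg 0 1 (fun t => Real.exp |φ t|) }

/-!
Both extremizers are odd about `1/2`: `φ t = h t` on `[0, 1/2]` and `φ t = -h (1 - t)` beyond,
so `⟨φ⟩ = 0` and `⟨exp |φ|⟩ = 2 ∫₀^{1/2} exp |h|`. On a subinterval of either half `φ` oscillates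
like `h`; on a subinterval straddling `1/2` its oscillation is at most `⟨φ²⟩`, which is at most
`ε²` once `∫ₓ^{1/2} h² ≤ ε² (1/2 - x)` for every `x ∈ [0, 1/2]`.

For `ε ≤ 1/2` take `h ≡ ε`. For `ε > 1/2` take `h t = 1 - ε + ε log⁺ (u / t)` with
`u = (2ε - 1)/(4ε)`. The oscillation of `log⁺ (u / t)` is at most `1` on every interval: on an
interval containing `u` this follows from `∫ log⁺² (u / t) ≤ 2 ∫ log⁺ (u / t)`, and an interval
left of `u` is reduced to that case by moving the cut-off to its right end point. Finally
`∫₀^{1/2} exp h = e^{1-ε}/(4(1 - ε))` by integrating `t^{-ε}`.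
-/

open Set

noncomputable def intervalVar (c d : ℝ) (f : ℝ → ℝ) : ℝ :=
  intervalAvg c d (fun t => (f t - intervalAvg c d f) ^ 2)

section IntervalAverage

variable {a b c d : ℝ} {f g : ℝ → ℝ}

lemma intervalAvg_congr_Ioo (hcd : c ≤ d) (h : EqOn f g (Ioo c d)) :
    intervalAvg c d f = intervalAvg c d g := by
  rw [intervalAvg, intervalAvg, intervalIntegral.integral_congr_Ioo_of_le hcd h]

lemma intervalVar_congr_Ioo (hcd : c ≤ d) (h : EqOn f g (Ioo c d)) :
    intervalVar c d f = intervalVar c d g := by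
  rw [intervalVar, intervalVar, intervalAvg_congr_Ioo hcd h]
  exact intervalAvg_congr_Ioo hcd fun t ht => by rw [h ht]

lemma intervalAvg_comp_sub_left :
    intervalAvg c d (fun t => f (a - t)) = intervalAvg (a - d) (a - c) f := by
  rw [intervalAvg, intervalAvg, intervalIntegral.integral_comp_sub_left, sub_sub_sub_cancel_left]

lemma intervalVar_comp_sub_left :
    intervalVar c d (fun t => f (a - t)) = intervalVar (a - d) (a - c) f := by
  rw [intervalVar, intervalVar, intervalAvg_comp_sub_left]
  exact intervalAvg_comp_sub_left (f := fun t => (f t - intervalAvg (a - d) (a - c) f) ^ 2)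

lemma intervalVar_neg : intervalVar c d (fun t => -f t) = intervalVar c d f := by
  have hneg : intervalAvg c d (fun t => -f t) = -intervalAvg c d f := by
    rw [intervalAvg, intervalAvg, intervalIntegral.integral_neg, mul_neg]
  simp only [intervalVar, hneg, neg_sub_neg, ← neg_sub (f _), neg_sq]

lemma intervalAvg_const (hcd : c ≠ d) : intervalAvg c d (fun _ => b) = b := by
  rw [intervalAvg, intervalIntegral.integral_const, smul_eq_mul,
    inv_mul_cancel_left₀ (sub_ne_zero.2 hcd.symm)]

lemma intervalVar_const : intervalVar c d (fun _ => b) = 0 := by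
  rcases eq_or_ne c d with rfl | hcd
  · simp [intervalVar, intervalAvg]
  · simp [intervalVar, intervalAvg_const hcd]

lemma intervalAvg_const_mul :
    intervalAvg c d (fun t => b * f t) = b * intervalAvg c d f := by
  rw [intervalAvg, intervalAvg, intervalIntegral.integral_const_mul, mul_left_comm]

lemma intervalAvg_const_add_mul (hcd : c ≠ d) (hf : IntervalIntegrable f volume c d) :
    intervalAvg c d (fun t => a + b * f t) = a + b * intervalAvg c d f := by
  rw [intervalAvg, intervalIntegral.integral_add intervalIntegrable_const (hf.const_mul b),
    mul_add, ← intervalAvg, ← intervalAvg, intervalAvg_const hcd, intervalAvg_const_mul]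

lemma intervalVar_eq_sub (hcd : c ≠ d) (hf : IntervalIntegrable f volume c d)
    (hf2 : IntervalIntegrable (fun t => f t ^ 2) volume c d) :
    intervalVar c d f = intervalAvg c d (fun t => f t ^ 2) - intervalAvg c d f ^ 2 := by
  set m := intervalAvg c d f
  have hm : m = (d - c)⁻¹ * ∫ t in c..d, f t := rfl
  have hL : (d - c)⁻¹ * (d - c) = 1 := inv_mul_cancel₀ (sub_ne_zero.2 hcd.symm)
  have hexp : (fun t => (f t - m) ^ 2) = fun t => (f t ^ 2 - 2 * m * f t) + m ^ 2 := by
    funext t; ring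
  rw [intervalVar, hexp, intervalAvg,
    intervalIntegral.integral_add (hf2.sub (hf.const_mul _)) intervalIntegrable_const,
    intervalIntegral.integral_sub hf2 (hf.const_mul _), intervalIntegral.integral_const_mul,
    intervalIntegral.integral_const, smul_eq_mul, intervalAvg]
  linear_combination m ^ 2 * hL + 2 * m * hm

lemma intervalVar_le_intervalAvg_sq (hcd : c ≠ d) (hf : IntervalIntegrable f volume c d)
    (hf2 : IntervalIntegrable (fun t => f t ^ 2) volume c d) :
    intervalVar c d f ≤ intervalAvg c d (fun t => f t ^ 2) := by
  rw [intervalVar_eq_sub hcd hf hf2]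
  linarith [sq_nonneg (intervalAvg c d f)]

lemma intervalVar_const_add_mul (hcd : c ≠ d) (hf : IntervalIntegrable f volume c d) :
    intervalVar c d (fun t => a + b * f t) = b ^ 2 * intervalVar c d f := by
  have hsq : (fun t => (a + b * f t - (a + b * intervalAvg c d f)) ^ 2)
      = fun t => b ^ 2 * (f t - intervalAvg c d f) ^ 2 := by
    funext t; ring
  rw [intervalVar, intervalVar, intervalAvg_const_add_mul hcd hf, hsq, intervalAvg_const_mul]

end IntervalAverage

section TruncLog

open Real

variable {s b u x ε : ℝ}

lemma continuousOn_mul_log_sq : ContinuousOn (fun t => t * log t ^ 2) (Ici 0) := by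
  have hc : Continuous fun t => 4 * (√t * log √t) ^ 2 :=
    continuous_const.mul ((continuous_mul_log.comp continuous_sqrt).pow 2)
  refine hc.continuousOn.congr fun t (ht : 0 ≤ t) => ?_
  show t * log t ^ 2 = 4 * (√t * log √t) ^ 2
  rw [log_sqrt ht, mul_pow, sq_sqrt ht]
  ring

lemma hasDerivAt_log_sq_antideriv (hx : x ≠ 0) :
    HasDerivAt (fun t => t * log t ^ 2 - 2 * (t * log t) + 2 * t) (log x ^ 2) x := by
  have h := (((hasDerivAt_id' x).fun_mul ((hasDerivAt_log hx).fun_pow 2)).fun_sub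
    (((hasDerivAt_id' x).fun_mul (hasDerivAt_log hx)).const_mul 2)).fun_add
    ((hasDerivAt_id' x).const_mul 2)
  refine h.congr_deriv ?_
  field_simp
  ring

lemma continuousOn_log_sq_antideriv :
    ContinuousOn (fun t => t * log t ^ 2 - 2 * (t * log t) + 2 * t) (Ici 0) :=
  (continuousOn_mul_log_sq.sub (continuous_mul_log.const_mul 2).continuousOn).add
    (continuous_const.mul continuous_id).continuousOn

lemma intervalIntegrable_log_sq (hs : 0 ≤ s) (hsb : s ≤ b) :
    IntervalIntegrable (fun t => log t ^ 2) volume s b :=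
  (intervalIntegrable_iff_integrableOn_Ioc_of_le hsb).2 <|
    intervalIntegral.integrableOn_deriv_of_nonneg
      (continuousOn_log_sq_antideriv.mono fun _ ht => hs.trans ht.1)
      (fun _ ht => hasDerivAt_log_sq_antideriv (hs.trans_lt ht.1).ne') fun _ _ => sq_nonneg _

lemma integral_log_sq (hs : 0 ≤ s) (hsb : s ≤ b) :
    ∫ t in s..b, log t ^ 2 =
      (b * log b ^ 2 - 2 * (b * log b) + 2 * b) - (s * log s ^ 2 - 2 * (s * log s) + 2 * s) :=
  intervalIntegral.integral_eq_sub_of_hasDerivAt_of_le hsb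
    (continuousOn_log_sq_antideriv.mono fun _ ht => hs.trans ht.1)
    (fun _ ht => hasDerivAt_log_sq_antideriv (hs.trans_lt ht.1).ne')
    (intervalIntegrable_log_sq hs hsb)

noncomputable def truncLog (u t : ℝ) : ℝ := max 0 (log u - log t)

lemma truncLog_nonneg (u t : ℝ) : 0 ≤ truncLog u t := le_max_left _ _

lemma truncLog_of_le (ht : 0 < t) (htu : t ≤ u) : truncLog u t = log u - log t :=
  max_eq_right (sub_nonneg.2 (log_le_log ht htu))

lemma truncLog_of_ge (hu : 0 < u) (hut : u ≤ t) : truncLog u t = 0 :=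
  max_eq_left (sub_nonpos.2 (log_le_log hu hut))

lemma measurable_truncLog (u : ℝ) : Measurable (truncLog u) :=
  measurable_const.max (measurable_const.sub measurable_log)

lemma abs_truncLog_le (u t : ℝ) : |truncLog u t| ≤ |log u - log t| := by
  rw [abs_of_nonneg (truncLog_nonneg u t)]
  exact max_le (abs_nonneg _) (le_abs_self _)

lemma intervalIntegrable_truncLog (u s b : ℝ) : IntervalIntegrable (truncLog u) volume s b :=
  (intervalIntegrable_const.sub intervalIntegral.intervalIntegrable_log').mono_fun
    (measurable_truncLog u).aestronglyMeasurable (ae_of_all _ fun t => abs_truncLog_le u t)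

lemma intervalIntegrable_truncLog_sq (hs : 0 ≤ s) (hsb : s ≤ b) :
    IntervalIntegrable (fun t => truncLog u t ^ 2) volume s b := by
  have hdom : IntervalIntegrable (fun t => (log u - log t) ^ 2) volume s b := by
    simp only [sub_sq]
    exact (intervalIntegrable_const.sub (intervalIntegral.intervalIntegrable_log'.const_mul _)).add
      (intervalIntegrable_log_sq hs hsb)
  refine hdom.mono_fun ((measurable_truncLog u).pow_const 2).aestronglyMeasurable
    (ae_of_all _ fun t => ?_)
  simpa only [norm_pow, Real.norm_eq_abs, sq_abs] using sq_le_sq.2 (abs_truncLog_le u t)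

lemma integral_comp_truncLog (F : ℝ → ℝ) (hF : F 0 = 0) (hu : 0 < u) (hs : 0 ≤ s)
    (hsu : s ≤ u) (hub : u ≤ b) (hint : IntervalIntegrable (fun t => F (truncLog u t)) volume s b) :
    ∫ t in s..b, F (truncLog u t) = ∫ t in s..u, F (log u - log t) := by
  have hmem : u ∈ uIcc s b := mem_uIcc_of_le hsu hub
  rw [← intervalIntegral.integral_add_adjacent_intervals
    (hint.mono_set (uIcc_subset_uIcc_left hmem)) (hint.mono_set (uIcc_subset_uIcc_right hmem)),
    intervalIntegral.integral_congr_Ioo_of_le hub (g := fun _ => 0)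
      fun t ht => by simp only [truncLog_of_ge hu ht.1.le, hF],
    intervalIntegral.integral_zero, add_zero]
  exact intervalIntegral.integral_congr_Ioo_of_le hsu
    fun t ht => by simp only [truncLog_of_le (hs.trans_lt ht.1) ht.2.le]

lemma integral_truncLog (hu : 0 < u) (hs : 0 ≤ s) (hsu : s ≤ u) (hub : u ≤ b) :
    ∫ t in s..b, truncLog u t = u - s * (log u - log s + 1) := by
  refine (integral_comp_truncLog id rfl hu hs hsu hub (intervalIntegrable_truncLog u s b)).trans ?_
  simp only [id]
  rw [intervalIntegral.integral_sub intervalIntegrable_const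
      intervalIntegral.intervalIntegrable_log', intervalIntegral.integral_const, integral_log,
    smul_eq_mul]
  ring

lemma integral_truncLog_sq (hu : 0 < u) (hs : 0 ≤ s) (hsu : s ≤ u) (hub : u ≤ b) :
    ∫ t in s..b, truncLog u t ^ 2 =
      2 * u - s * ((log u - log s) ^ 2 + 2 * (log u - log s) + 2) := by
  rw [integral_comp_truncLog (· ^ 2) (zero_pow two_ne_zero) hu hs hsu hub
    (intervalIntegrable_truncLog_sq hs (hsu.trans hub))]
  simp only [sub_sq]
  rw [intervalIntegral.integral_add
      (intervalIntegrable_const.sub (intervalIntegral.intervalIntegrable_log'.const_mul _))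
      (intervalIntegrable_log_sq hs hsu),
    intervalIntegral.integral_sub intervalIntegrable_const
      (intervalIntegral.intervalIntegrable_log'.const_mul _),
    intervalIntegral.integral_const, intervalIntegral.integral_const_mul, integral_log,
    integral_log_sq hs hsu, smul_eq_mul]
  ring

lemma intervalVar_truncLog_le_one_of_mem (hu : 0 < u) (hs : 0 ≤ s) (hsb : s < b) (hsu : s ≤ u)
    (hub : u ≤ b) : intervalVar s b (truncLog u) ≤ 1 := by
  have hsq : ∫ t in s..b, truncLog u t ^ 2 ≤ 2 * ∫ t in s..b, truncLog u t := by
    rw [integral_truncLog_sq hu hs hsu hub, integral_truncLog hu hs hsu hub]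
    nlinarith [mul_nonneg hs (sq_nonneg (log u - log s))]
  have havg :
      intervalAvg s b (fun t => truncLog u t ^ 2) ≤ 2 * intervalAvg s b (truncLog u) := by
    rw [intervalAvg, intervalAvg, mul_left_comm]
    exact mul_le_mul_of_nonneg_left hsq (inv_nonneg.2 (sub_nonneg.2 hsb.le))
  rw [intervalVar_eq_sub hsb.ne (intervalIntegrable_truncLog u s b)
    (intervalIntegrable_truncLog_sq hs hsb.le)]
  nlinarith [sq_nonneg (intervalAvg s b (truncLog u) - 1)]

lemma intervalVar_truncLog_le_one (hu : 0 < u) (hs : 0 ≤ s) (hsb : s < b) :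
    intervalVar s b (truncLog u) ≤ 1 := by
  rcases le_total u s with hus | hsu
  · rw [intervalVar_congr_Ioo hsb.le (g := fun _ => 0)
      fun t ht => truncLog_of_ge hu (hus.trans ht.1.le), intervalVar_const]
    exact zero_le_one
  rcases le_total u b with hub | hbu
  · exact intervalVar_truncLog_le_one_of_mem hu hs hsb hsu hub
  -- on `(s, b) ⊆ (0, u]`, `truncLog u` and `truncLog b` differ by a constant
  have hshift : EqOn (truncLog u) (fun t => (log u - log b) + 1 * truncLog b t) (Ioo s b) :=
    fun t ht => by
      dsimp only
      rw [truncLog_of_le (hs.trans_lt ht.1) (ht.2.le.trans hbu),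
        truncLog_of_le (hs.trans_lt ht.1) ht.2.le]
      ring
  rw [intervalVar_congr_Ioo hsb.le hshift,
    intervalVar_const_add_mul hsb.ne (intervalIntegrable_truncLog b s b), one_pow, one_mul]
  exact intervalVar_truncLog_le_one_of_mem (hs.trans_lt hsb) hs hsb hsb.le le_rfl

lemma eqOn_exp_mul_truncLog :
    EqOn (fun t => u ^ ε * t ^ (-ε)) (fun t => exp (ε * truncLog u t)) (Ioc 0 u) := by
  intro t ht
  simp only
  rw [truncLog_of_le ht.1 ht.2, rpow_def_of_pos (ht.1.trans_le ht.2), rpow_def_of_pos ht.1,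
    ← exp_add]
  ring_nf

lemma intervalIntegrable_exp_mul_truncLog (hu : 0 < u) (hub : u ≤ b) (hε : ε < 1) :
    IntervalIntegrable (fun t => exp (ε * truncLog u t)) volume 0 b := by
  have hleft : IntervalIntegrable (fun t => exp (ε * truncLog u t)) volume 0 u := by
    refine ((intervalIntegral.intervalIntegrable_rpow' (r := -ε) (by linarith)).const_mul
      (u ^ ε)).congr ?_
    rw [uIoc_of_le hu.le]
    exact eqOn_exp_mul_truncLog
  refine hleft.trans (intervalIntegrable_const (c := 1).congr ?_)
  rw [uIoc_of_le hub]
  intro t ht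
  simp only [truncLog_of_ge hu ht.1.le, mul_zero, exp_zero]

lemma integral_exp_mul_truncLog (hu : 0 < u) (hub : u ≤ b) (hε : ε < 1) :
    ∫ t in 0..b, exp (ε * truncLog u t) = u / (1 - ε) + (b - u) := by
  have hint := intervalIntegrable_exp_mul_truncLog hu hub hε
  have hmem : u ∈ uIcc 0 b := mem_uIcc_of_le hu.le hub
  rw [← intervalIntegral.integral_add_adjacent_intervals
      (hint.mono_set (uIcc_subset_uIcc_left hmem)) (hint.mono_set (uIcc_subset_uIcc_right hmem)),
    ← intervalIntegral.integral_congr_Ioo_of_le hu.le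
      fun t ht => eqOn_exp_mul_truncLog (Ioo_subset_Ioc_self ht),
    intervalIntegral.integral_congr_Ioo_of_le hub (g := fun _ => 1)
      fun t ht => by simp only [truncLog_of_ge hu ht.1.le, mul_zero, exp_zero],
    intervalIntegral.integral_const_mul, integral_rpow (Or.inl (by linarith)),
    zero_rpow (by linarith), sub_zero, ← mul_div_assoc, ← rpow_add hu, add_neg_cancel_left,
    rpow_one, neg_add_eq_sub, intervalIntegral.integral_const, smul_eq_mul, mul_one]

end TruncLog

section OddExtension

variable {h : ℝ → ℝ} {c d t ε : ℝ}

noncomputable def oddExtension (h : ℝ → ℝ) (t : ℝ) : ℝ :=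
  if t ≤ 1 / 2 then h t else -h (1 - t)

lemma oddExtension_of_le (ht : t ≤ 1 / 2) : oddExtension h t = h t := if_pos ht

lemma oddExtension_of_gt (ht : 1 / 2 < t) : oddExtension h t = -h (1 - t) := if_neg ht.not_ge

lemma integral_comp_oddExtension_of_le_half (F : ℝ → ℝ) (hcd : c ≤ d) (hd : d ≤ 1 / 2) :
    ∫ t in c..d, F (oddExtension h t) = ∫ t in c..d, F (h t) :=
  intervalIntegral.integral_congr_Ioo_of_le hcd fun _ ht => by
    simp only [oddExtension_of_le (ht.2.le.trans hd)]

lemma integral_comp_oddExtension_of_half_le (F : ℝ → ℝ) (hc : 1 / 2 ≤ c) (hcd : c ≤ d) :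
    ∫ t in c..d, F (oddExtension h t) = ∫ t in (1 - d)..(1 - c), F (-h t) := by
  rw [intervalIntegral.integral_congr_Ioo_of_le hcd (g := fun t => F (-h (1 - t)))
    fun _ ht => by simp only [oddExtension_of_gt (hc.trans_lt ht.1)]]
  exact intervalIntegral.integral_comp_sub_left (fun t => F (-h t)) 1

lemma intervalIntegrable_comp_oddExtension (F : ℝ → ℝ)
    (h₁ : IntervalIntegrable (fun t => F (h t)) volume 0 (1 / 2))
    (h₂ : IntervalIntegrable (fun t => F (-h t)) volume 0 (1 / 2)) :
    IntervalIntegrable (fun t => F (oddExtension h t)) volume 0 1 := by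
  have hright : IntervalIntegrable (fun t => F (-h (1 - t))) volume (1 / 2) 1 := by
    simpa only [sub_zero, show (1 : ℝ) - 1 / 2 = 1 / 2 by norm_num]
      using (h₂.comp_sub_left 1).symm
  refine (h₁.congr ?_).trans (hright.congr ?_) <;> rw [uIoc_of_le (by norm_num)] <;> intro t ht
  · simp only [oddExtension_of_le ht.2]
  · simp only [oddExtension_of_gt ht.1]

lemma integral_comp_oddExtension (F : ℝ → ℝ)
    (h₁ : IntervalIntegrable (fun t => F (h t)) volume 0 (1 / 2))
    (h₂ : IntervalIntegrable (fun t => F (-h t)) volume 0 (1 / 2)) :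
    ∫ t in (0 : ℝ)..1, F (oddExtension h t) =
      (∫ t in (0 : ℝ)..1 / 2, F (h t)) + ∫ t in (0 : ℝ)..1 / 2, F (-h t) := by
  have hint := intervalIntegrable_comp_oddExtension F h₁ h₂
  have hmid : (1 / 2 : ℝ) ∈ uIcc 0 1 := mem_uIcc_of_le (by norm_num) (by norm_num)
  rw [← intervalIntegral.integral_add_adjacent_intervals
    (hint.mono_set (uIcc_subset_uIcc_left hmid)) (hint.mono_set (uIcc_subset_uIcc_right hmid)),
    integral_comp_oddExtension_of_le_half F (by norm_num) le_rfl,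
    integral_comp_oddExtension_of_half_le F le_rfl (by norm_num)]
  norm_num

lemma intervalAvg_oddExtension (hh : IntervalIntegrable h volume 0 (1 / 2)) :
    intervalAvg 0 1 (oddExtension h) = 0 := by
  have h0 := integral_comp_oddExtension id hh hh.neg
  simp only [id, intervalIntegral.integral_neg, add_neg_cancel] at h0
  rw [intervalAvg, h0, mul_zero]

lemma intervalAvg_exp_abs_oddExtension
    (hh : IntervalIntegrable (fun t => Real.exp |h t|) volume 0 (1 / 2)) :
    intervalAvg 0 1 (fun t => Real.exp |oddExtension h t|) =
      2 * ∫ t in (0 : ℝ)..1 / 2, Real.exp |h t| := by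
  have h0 := integral_comp_oddExtension (fun x => Real.exp |x|) hh
    (by simpa only [abs_neg] using hh)
  simp only [abs_neg] at h0
  rw [intervalAvg, h0]
  ring

lemma intervalVar_oddExtension_of_le_half (hcd : c ≤ d) (hd : d ≤ 1 / 2) :
    intervalVar c d (oddExtension h) = intervalVar c d h :=
  intervalVar_congr_Ioo hcd fun _ ht => oddExtension_of_le (ht.2.le.trans hd)

lemma intervalVar_oddExtension_of_half_le (hc : 1 / 2 ≤ c) (hcd : c ≤ d) :
    intervalVar c d (oddExtension h) = intervalVar (1 - d) (1 - c) h := by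
  rw [intervalVar_congr_Ioo hcd (g := fun t => -h (1 - t))
    fun _ ht => oddExtension_of_gt (hc.trans_lt ht.1), intervalVar_neg, intervalVar_comp_sub_left]

lemma memBMO_oddExtension (hh : IntervalIntegrable h volume 0 (1 / 2))
    (hh2 : IntervalIntegrable (fun t => h t ^ 2) volume 0 (1 / 2))
    (hvar : ∀ c d, 0 ≤ c → c < d → d ≤ 1 / 2 → intervalVar c d h ≤ ε ^ 2)
    (htail : ∀ x, 0 ≤ x → x ≤ 1 / 2 → ∫ t in x..1 / 2, h t ^ 2 ≤ ε ^ 2 * (1 / 2 - x)) :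
    MemBMO ε 0 1 (oddExtension h) := by
  have hint : IntervalIntegrable (oddExtension h) volume 0 1 :=
    intervalIntegrable_comp_oddExtension id hh hh.neg
  have hint2 := intervalIntegrable_comp_oddExtension (· ^ 2) hh2 (by simpa only [neg_sq] using hh2)
  refine ⟨(intervalIntegrable_iff_integrableOn_Icc_of_le zero_le_one).1 hint,
    (intervalIntegrable_iff_integrableOn_Icc_of_le zero_le_one).1 hint2, fun c d hc hcd hd => ?_⟩
  change intervalVar c d (oddExtension h) ≤ ε ^ 2
  rcases le_total d (1 / 2) with hd2 | hd2
  · rw [intervalVar_oddExtension_of_le_half hcd.le hd2]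
    exact hvar c d hc hcd hd2
  rcases le_total (1 / 2) c with hc2 | hc2
  · rw [intervalVar_oddExtension_of_half_le hc2 hcd.le]
    exact hvar _ _ (by linarith) (by linarith) (by linarith)
  have hsub : uIcc c d ⊆ uIcc 0 1 := by
    rw [uIcc_of_le hcd.le, uIcc_of_le zero_le_one]
    exact Icc_subset_Icc hc hd
  have hint2' := hint2.mono_set hsub
  have hmid : (1 / 2 : ℝ) ∈ uIcc c d := mem_uIcc_of_le hc2 hd2
  have hsplit : ∫ t in c..d, oddExtension h t ^ 2 =
      (∫ t in c..1 / 2, h t ^ 2) + ∫ t in (1 - d)..1 / 2, h t ^ 2 := by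
    rw [← intervalIntegral.integral_add_adjacent_intervals
      (hint2'.mono_set (uIcc_subset_uIcc_left hmid))
      (hint2'.mono_set (uIcc_subset_uIcc_right hmid)),
      integral_comp_oddExtension_of_le_half (· ^ 2) hc2 le_rfl,
      integral_comp_oddExtension_of_half_le (· ^ 2) le_rfl hd2]
    norm_num [neg_sq]
  refine (intervalVar_le_intervalAvg_sq hcd.ne (hint.mono_set hsub) hint2').trans ?_
  rw [intervalAvg, hsplit, inv_mul_le_iff₀ (sub_pos.2 hcd)]
  linarith [htail c hc hc2, htail (1 - d) (by linarith) (by linarith)]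

end OddExtension

section Extremizers

open Real

variable {ε x : ℝ}

lemma memBMO_oddExtension_const (ε : ℝ) : MemBMO ε 0 1 (oddExtension fun _ => ε) :=
  memBMO_oddExtension intervalIntegrable_const intervalIntegrable_const
    (fun _ _ _ _ _ => by rw [intervalVar_const]; positivity)
    (fun _ _ _ => by rw [intervalIntegral.integral_const, smul_eq_mul, mul_comm])

lemma intervalAvg_exp_abs_oddExtension_const (hε : 0 ≤ ε) :
    intervalAvg 0 1 (fun t => exp |oddExtension (fun _ => ε) t|) = exp ε := by
  rw [intervalAvg_exp_abs_oddExtension intervalIntegrable_const, intervalIntegral.integral_const,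
    smul_eq_mul, abs_of_nonneg hε]
  ring

noncomputable def jnCutoff (ε : ℝ) : ℝ := (2 * ε - 1) / (4 * ε)

noncomputable def jnProfile (ε t : ℝ) : ℝ := 1 - ε + ε * truncLog (jnCutoff ε) t

lemma jnCutoff_pos (hε : 1 / 2 < ε) : 0 < jnCutoff ε := div_pos (by linarith) (by linarith)

lemma jnCutoff_lt_half (hε : 1 / 2 < ε) : jnCutoff ε < 1 / 2 := by
  rw [jnCutoff, div_lt_iff₀ (by linarith)]
  linarith

lemma jnProfile_sq (ε t : ℝ) : jnProfile ε t ^ 2 = (1 - ε) ^ 2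
    + (2 * (1 - ε) * ε * truncLog (jnCutoff ε) t + ε ^ 2 * truncLog (jnCutoff ε) t ^ 2) := by
  rw [jnProfile]
  ring

lemma intervalIntegrable_jnProfile (ε a b : ℝ) : IntervalIntegrable (jnProfile ε) volume a b :=
  intervalIntegrable_const.add ((intervalIntegrable_truncLog _ a b).const_mul ε)

lemma intervalIntegrable_jnProfile_sq {a b : ℝ} (ha : 0 ≤ a) (hab : a ≤ b) :
    IntervalIntegrable (fun t => jnProfile ε t ^ 2) volume a b := by
  simp only [jnProfile_sq]
  exact intervalIntegrable_const.add (((intervalIntegrable_truncLog _ a b).const_mul _).add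
    ((intervalIntegrable_truncLog_sq ha hab).const_mul _))

lemma intervalVar_jnProfile_le (hε : 1 / 2 < ε) {c d : ℝ} (hc : 0 ≤ c) (hcd : c < d) :
    intervalVar c d (jnProfile ε) ≤ ε ^ 2 := by
  unfold jnProfile
  rw [intervalVar_const_add_mul hcd.ne (intervalIntegrable_truncLog _ c d)]
  nlinarith [intervalVar_truncLog_le_one (jnCutoff_pos hε) hc hcd, sq_nonneg ε]

lemma integral_jnProfile_sq_le (hε : 1 / 2 < ε) (hε1 : ε ≤ 1) (hx : 0 ≤ x) (hx2 : x ≤ 1 / 2) :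
    ∫ t in x..1 / 2, jnProfile ε t ^ 2 ≤ ε ^ 2 * (1 / 2 - x) := by
  set u := jnCutoff ε
  have hu : 0 < u := jnCutoff_pos hε
  have hu2 : u ≤ 1 / 2 := (jnCutoff_lt_half hε).le
  have hexp : ∫ t in x..1 / 2, jnProfile ε t ^ 2 = (1 - ε) ^ 2 * (1 / 2 - x)
      + 2 * (1 - ε) * ε * (∫ t in x..1 / 2, truncLog u t)
      + ε ^ 2 * ∫ t in x..1 / 2, truncLog u t ^ 2 := by
    simp only [jnProfile_sq]
    rw [intervalIntegral.integral_add intervalIntegrable_const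
      (((intervalIntegrable_truncLog u x _).const_mul _).add
        ((intervalIntegrable_truncLog_sq hx hx2).const_mul _)),
      intervalIntegral.integral_add ((intervalIntegrable_truncLog u x _).const_mul _)
        ((intervalIntegrable_truncLog_sq hx hx2).const_mul _),
      intervalIntegral.integral_const, intervalIntegral.integral_const_mul,
      intervalIntegral.integral_const_mul, smul_eq_mul]
    ring
  rcases le_total u x with hux | hxu
  · have hzero : ∀ t ∈ Ioo x (1 / 2), truncLog u t = 0 :=
      fun t ht => truncLog_of_ge hu (hux.trans ht.1.le)
    rw [hexp, intervalIntegral.integral_congr_Ioo_of_le hx2 hzero,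
      intervalIntegral.integral_congr_Ioo_of_le hx2 (f := fun t => truncLog u t ^ 2)
        (g := fun _ => 0) fun t ht => by simp only [hzero t ht]; norm_num]
    simp only [intervalIntegral.integral_zero]
    nlinarith
  -- `u` is chosen so that the bound is an equality at `x = 0`
  have hId : (1 - ε) ^ 2 + 4 * ε * (1 - ε) * u + 4 * ε ^ 2 * u = ε ^ 2 := by
    simp only [u, jnCutoff]; field_simp; ring
  set μ := log u - log x
  have hxμ : 0 ≤ x * μ := by
    rcases hx.eq_or_lt with rfl | hx0
    · simp
    · exact mul_nonneg hx (sub_nonneg.2 (log_le_log hx0 hxu))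
  rw [hexp, integral_truncLog hu hx hxu hu2, integral_truncLog_sq hu hx hxu hu2]
  have hgap : 0 ≤ ε * (2 * (1 - ε) * (x * μ) + ε * (x * μ ^ 2) + 2 * ε * (x * μ)
      + 2 * (1 - 2 * u) * x) := by
    have : 0 ≤ x * μ ^ 2 := mul_nonneg hx (sq_nonneg μ)
    have : 0 ≤ 1 - ε := by linarith
    have : 0 ≤ 1 - 2 * u := by linarith
    positivity
  linear_combination (1 / 2 - x) * hId + hgap

lemma memBMO_oddExtension_jnProfile (hε : 1 / 2 < ε) (hε1 : ε ≤ 1) :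
    MemBMO ε 0 1 (oddExtension (jnProfile ε)) :=
  memBMO_oddExtension (intervalIntegrable_jnProfile ε 0 _)
    (intervalIntegrable_jnProfile_sq le_rfl (by norm_num))
    (fun _ _ hc hcd _ => intervalVar_jnProfile_le hε hc hcd)
    (fun _ hx hx2 => integral_jnProfile_sq_le hε hε1 hx hx2)

lemma intervalAvg_exp_abs_oddExtension_jnProfile (hε : 1 / 2 < ε) (hε1 : ε < 1) :
    intervalAvg 0 1 (fun t => exp |oddExtension (jnProfile ε) t|) =
      exp (1 - ε) / (2 - 2 * ε) := by
  have hu := jnCutoff_pos hε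
  have hu2 := (jnCutoff_lt_half hε).le
  have hfac : (fun t => exp |jnProfile ε t|) =
      fun t => exp (1 - ε) * exp (ε * truncLog (jnCutoff ε) t) := by
    funext t
    have : 0 ≤ ε * truncLog (jnCutoff ε) t := mul_nonneg (by linarith) (truncLog_nonneg _ t)
    rw [jnProfile, abs_of_nonneg (by linarith), exp_add]
  have hint := (intervalIntegrable_exp_mul_truncLog hu hu2 hε1).const_mul (exp (1 - ε))
  rw [intervalAvg_exp_abs_oddExtension (hfac ▸ hint), hfac, intervalIntegral.integral_const_mul,
    integral_exp_mul_truncLog hu hu2 hε1, jnCutoff]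
  have : (1 : ℝ) - ε ≠ 0 := by linarith
  field_simp
  ring

end Extremizers

/-- For every `ε ∈ [0,1)` the sharp symmetric integral John–Nirenberg
inequality is attained: there is `φ ∈ BMO_ε([0,1])` with `⟨φ⟩ = 0` and
`⟨exp|φ|⟩ = e^ε` if `ε ≤ 1/2`, and `⟨exp|φ|⟩ = e^{1−ε}/(2−2ε)` if `ε ≥ 1/2`. -/
theorem symmetric_JN_attained (ε : ℝ) (h0 : 0 ≤ ε) (h1 : ε < 1) :
    ∃ φ : ℝ → ℝ, MemBMO ε 0 1 φ ∧ intervalAvg 0 1 φ = 0 ∧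
      (ε ≤ 1 / 2 → intervalAvg 0 1 (fun t => Real.exp |φ t|) = Real.exp ε) ∧
      (1 / 2 ≤ ε → intervalAvg 0 1 (fun t => Real.exp |φ t|) =
        Real.exp (1 - ε) / (2 - 2 * ε)) := by
  rcases le_or_gt ε (1 / 2) with hle | hgt
  · refine ⟨oddExtension fun _ => ε, memBMO_oddExtension_const ε,
      intervalAvg_oddExtension intervalIntegrable_const,
      fun _ => intervalAvg_exp_abs_oddExtension_const h0, fun hge => ?_⟩
    rw [intervalAvg_exp_abs_oddExtension_const h0, le_antisymm hle hge]
    norm_num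
  · exact ⟨oddExtension (jnProfile ε), memBMO_oddExtension_jnProfile hgt h1.le,
      intervalAvg_oddExtension (intervalIntegrable_jnProfile ε 0 _),
      fun hle => absurd hle hgt.not_ge,
      fun _ => intervalAvg_exp_abs_oddExtension_jnProfile hgt h1⟩
end

section
/- Let ε ∈ (0, 1/2) and set α = ε + (ε/(1+ε))(log(1−ε) − log(2ε²)). Then for every real s with 0 ≤ s ≤ α − ε, one has exp(s·(1+ε)/ε) ≤ (1−ε)/(2ε²) ≤ 1/ε²; consequently, for (x₁,x₂) ∈ Ω_ε with x₁ ≥ 0 and 0 ≤ x₁ − β ≤ α − ε where β = √(ε² + x₁² − x₂), the inequality exp(x₁ − β + ε) ≤ (1/ε²)·exp(−(x₁ − β)/ε + ε) holds (this expresses that ∂²g₂/∂x₂² ≤ 0 for the candidate Bellman function on Ω²_ε). -/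
open MeasureTheory Real

/- With `q = (1 - ε) / (2ε²)`, the threshold is `α - ε = ε / (1 + ε) · log q`, so on `[0, α - ε]`
the exponential `exp (s (1 + ε) / ε)` stays below `q ≤ 1 / ε²`. Splitting
`s + ε = s (1 + ε) / ε + (-s / ε + ε)` turns this into the concavity inequality at `s = x₁ - β`. -/

lemma exp_mul_le_of_le_log_div {s a q : ℝ} (ha : 0 < a) (hq : 0 < q)
    (hs : s ≤ Real.log q / a) : Real.exp (s * a) ≤ q :=
  (Real.le_log_iff_exp_le hq).mp ((le_div_iff₀ ha).mp hs)

lemma one_sub_div_two_mul_sq_le_one_div_sq {ε : ℝ} (hε : 0 < ε) :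
    (1 - ε) / (2 * ε ^ 2) ≤ 1 / ε ^ 2 := by
  rw [div_le_div_iff₀ (by positivity) (by positivity)]
  nlinarith

lemma exp_add_le_mul_exp_of_exp_mul_le {ε s C : ℝ} (hε : ε ≠ 0)
    (h : Real.exp (s * (1 + ε) / ε) ≤ C) :
    Real.exp (s + ε) ≤ C * Real.exp (-s / ε + ε) := by
  have hsplit : s + ε = s * (1 + ε) / ε + (-s / ε + ε) := by field_simp; ring
  rw [hsplit, Real.exp_add]
  exact mul_le_mul_of_nonneg_right h (Real.exp_nonneg _)

/-- The concavity inequality `∂²g₂/∂x₂² ≤ 0` for the candidate Bellman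
function on `Ω²_ε`, `ε ∈ (0, 1/2)`. -/
theorem candidate_concavity_omega2 (ε α : ℝ) (hε0 : 0 < ε) (hε : ε < 1 / 2)
    (hα : α = ε + ε / (1 + ε) * (Real.log (1 - ε) - Real.log (2 * ε ^ 2))) :
    (∀ s : ℝ, 0 ≤ s → s ≤ α - ε →
      Real.exp (s * (1 + ε) / ε) ≤ (1 - ε) / (2 * ε ^ 2) ∧
        (1 - ε) / (2 * ε ^ 2) ≤ 1 / ε ^ 2) ∧
    (∀ x₁ x₂ β : ℝ, β = Real.sqrt (ε ^ 2 + x₁ ^ 2 - x₂) →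
      x₁ ^ 2 ≤ x₂ → x₂ ≤ x₁ ^ 2 + ε ^ 2 → 0 ≤ x₁ →
      0 ≤ x₁ - β → x₁ - β ≤ α - ε →
      Real.exp (x₁ - β + ε) ≤ 1 / ε ^ 2 * Real.exp (-(x₁ - β) / ε + ε)) := by
  have h1ε : 0 < 1 - ε := by linarith
  have hq : 0 < (1 - ε) / (2 * ε ^ 2) := by positivity
  have hαε : α - ε = Real.log ((1 - ε) / (2 * ε ^ 2)) / ((1 + ε) / ε) := by
    rw [hα, ← Real.log_div h1ε.ne' (by positivity)]
    field_simp
    ring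
  have hbound : ∀ s : ℝ, 0 ≤ s → s ≤ α - ε →
      Real.exp (s * (1 + ε) / ε) ≤ (1 - ε) / (2 * ε ^ 2) ∧
        (1 - ε) / (2 * ε ^ 2) ≤ 1 / ε ^ 2 := fun s _ hs =>
    ⟨mul_div_assoc s (1 + ε) ε ▸ exp_mul_le_of_le_log_div (by positivity) hq (hαε ▸ hs),
      one_sub_div_two_mul_sq_le_one_div_sq hε0⟩
  refine ⟨hbound, fun x₁ x₂ β _ _ _ _ hs₀ hs₁ => ?_⟩
  obtain ⟨hexp, hq_le⟩ := hbound _ hs₀ hs₁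
  exact exp_add_le_mul_exp_of_exp_mul_le hε0.ne' (hexp.trans hq_le)
end
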